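/- arXiv:math/0109189 — 3 statements merged into one kernel-verified Lean document; each statement's English description precedes it below -/
import Mathlib

section
/- For every dimension d ≥ 5, the sum over all sites i ∈ ℤ^d of the squared hitting probabilities of the origin is finite: ∑_{i ∈ ℤ^d} (P^i(∃ n ≥ 0, S_n = 0))² < ∞. -/
/-!
The probability of hitting `0` from `i` is at most the Green function `G(i) = ∑ₙ P(Sₙ = -i)`,
and by symmetry and the Chapman–Kolmogorov identity `∑ᵢ G(i)² = ∑_{n,m} P(S_{n+m} = 0)`.
Fourier inversion on the torus gives `P(S_k = 0) = ∫_{(0,1]^d} φ(θ)^k dθ` with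
`φ(θ) = d⁻¹ ∑ⱼ cos 2πθⱼ`. Since `φ² ≤ exp (-d⁻¹ ∑ⱼ sin² 2πθⱼ)`, the integral of `φ^{2m}` factorises
into one-dimensional Gaussian-type integrals of size `O(√(d/m))`, so `P(S_k = 0) = O(k^{-d/2})`.
For `d ≥ 5` this is `O(k^{-5/2})`, and `∑_{n,m} (n + m + 1)^{-5/2} < ∞`.
-/

open MeasureTheory ProbabilityTheory

noncomputable section

/-- The set of the `2 d` signed unit vectors in `ℤ^d`. -/
def unitVecs (d : ℕ) : Set (Fin d → ℤ) :=
  {v | ∃ j : Fin d, v = Pi.single j 1 ∨ v = -Pi.single j 1}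

/-- The position at time `n` of the walk started at `x` with increments `ξ 0, ξ 1, …`:
`S_n = x + ξ_1 + ⋯ + ξ_n`. -/
def walk {d : ℕ} {Ω : Type*} (ξ : ℕ → Ω → (Fin d → ℤ)) (x : Fin d → ℤ)
    (n : ℕ) (ω : Ω) : Fin d → ℤ :=
  x + ∑ k ∈ Finset.range n, ξ k ω

/-- `ξ 0, ξ 1, …` are i.i.d. increments of a simple symmetric random walk on `ℤ^d` under `P`:
they are measurable, independent, and each is uniformly distributed on the `2 d` signed
unit vectors. -/
def IsSRW {d : ℕ} {Ω : Type*} [MeasurableSpace Ω] (P : Measure Ω)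
    (ξ : ℕ → Ω → (Fin d → ℤ)) : Prop :=
  (∀ k, Measurable (ξ k)) ∧
  iIndepFun ξ P ∧
  ∀ (k : ℕ) (v : Fin d → ℤ),
    P {ω | ξ k ω = v} = (unitVecs d).indicator (fun _ => (1 : ENNReal) / (2 * d)) v

open Finset Real
open scoped ENNReal FourierTransform

lemma summable_nat_add_one_rpow {p : ℝ} (hp : p < -1) :
    Summable fun n : ℕ => ((n : ℝ) + 1) ^ p := by
  simpa using (summable_nat_add_iff 1).2 (summable_nat_rpow.2 hp)

lemma add_add_one_rpow_neg_le {x y s : ℝ} (hx : 0 ≤ x) (hy : 0 ≤ y) (hs : 0 ≤ s) :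
    (x + y + 1) ^ (-s) ≤ (x + 1) ^ (-(s / 2)) * (y + 1) ^ (-(s / 2)) := by
  rw [← mul_rpow (by positivity) (by positivity), show -s = 2 * -(s / 2) by ring,
    rpow_mul (by positivity)]
  exact rpow_le_rpow_of_nonpos (by positivity) (by norm_cast; nlinarith) (by linarith)

lemma tsum_tsum_add_lt_top {f : ℕ → ℝ≥0∞} {C : ℝ≥0∞} {s : ℝ} (hC : C ≠ ⊤) (hs : 2 < s)
    (hf : ∀ k, f k ≤ C * ENNReal.ofReal (((k : ℝ) + 1) ^ (-s))) :
    ∑' n, ∑' m, f (n + m) < ⊤ := by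
  set g : ℕ → ℝ≥0∞ := fun n => ENNReal.ofReal (((n : ℝ) + 1) ^ (-(s / 2)))
  have hg : ∑' n, g n ≠ ⊤ := by
    rw [← ENNReal.ofReal_tsum_of_nonneg (fun n => by positivity)
      (summable_nat_add_one_rpow (by linarith))]
    exact ENNReal.ofReal_ne_top
  calc ∑' n, ∑' m, f (n + m) ≤ ∑' n, ∑' m, C * (g n * g m) := by
        refine ENNReal.tsum_le_tsum fun n => ENNReal.tsum_le_tsum fun m => (hf _).trans ?_
        gcongr
        rw [← ENNReal.ofReal_mul (by positivity)]
        exact ENNReal.ofReal_le_ofReal (by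
          exact_mod_cast add_add_one_rpow_neg_le n.cast_nonneg m.cast_nonneg (by linarith))
    _ = C * (∑' n, g n) * ∑' m, g m := by
        simp_rw [ENNReal.tsum_mul_left, ENNReal.tsum_mul_right, mul_assoc]
    _ < ⊤ := by finiteness

lemma integral_fourierChar_mul_int (n : ℤ) :
    ∫ t in Set.Ioc (0 : ℝ) 1, (𝐞 (t * n) : ℂ) = if n = 0 then 1 else 0 := by
  split_ifs with hn
  · simp [hn]
  have hc : 2 * π * n * Complex.I ≠ 0 := by simp [hn, pi_ne_zero]
  rw [← intervalIntegral.integral_of_le zero_le_one]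
  simp_rw [fourierChar_apply, show ∀ t : ℝ, ((2 * π * (t * n) : ℝ) : ℂ) * Complex.I =
    2 * π * n * Complex.I * t from fun t => by push_cast; ring]
  rw [integral_exp_mul_complex hc,
    show (2 * π * n * Complex.I * (1 : ℝ) : ℂ) = n * (2 * π * Complex.I) by push_cast; ring,
    Complex.exp_int_mul_two_pi_mul_I]
  simp

lemma integral_comp_sin_sq_eq_four_mul {f : ℝ → ℝ} (hf : Continuous f) :
    ∫ t in (0 : ℝ)..1, f (sin (2 * π * t) ^ 2)
      = 4 * ∫ t in (0 : ℝ)..1 / 4, f (sin (2 * π * t) ^ 2) := by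
  set g : ℝ → ℝ := fun t => f (sin (2 * π * t) ^ 2)
  have hint : ∀ u v : ℝ, IntervalIntegrable g volume u v := fun u v =>
    (by fun_prop : Continuous g).intervalIntegrable u v
  have hg_shift : ∀ t, g (t + 1 / 2) = g t := fun t => by
    simp only [g, mul_add, show 2 * π * (1 / 2) = π by ring, sin_add_pi, neg_sq]
  have hg_reflect : ∀ t, g (1 / 2 - t) = g t := fun t => by
    simp only [g, mul_sub, show 2 * π * (1 / 2) = π by ring, sin_pi_sub]
  have hshift : ∫ t in (1 / 2 : ℝ)..1, g t = ∫ t in (0 : ℝ)..1 / 2, g t := by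
    have h := intervalIntegral.integral_comp_add_right g (1 / 2 : ℝ) (a := 0) (b := 1 / 2)
    norm_num [hg_shift] at h
    exact h.symm
  have hreflect : ∫ t in (1 / 4 : ℝ)..1 / 2, g t = ∫ t in (0 : ℝ)..1 / 4, g t := by
    have h := intervalIntegral.integral_comp_sub_left g (1 / 2 : ℝ) (a := 0) (b := 1 / 4)
    norm_num [hg_reflect] at h
    exact h.symm
  rw [← intervalIntegral.integral_add_adjacent_intervals (hint 0 (1 / 2)) (hint (1 / 2) 1),
    hshift, ← intervalIntegral.integral_add_adjacent_intervals (hint 0 (1 / 4))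
    (hint (1 / 4) (1 / 2)), hreflect]
  ring

lemma integral_exp_neg_mul_sin_sq_le {a : ℝ} (ha : 0 < a) :
    ∫ t in (0 : ℝ)..1, exp (-(a * sin (2 * π * t) ^ 2)) ≤ √(π / a) := by
  -- Jordan's inequality `sin x ≥ 2x/π` on `[0, π/2]` gives the Gaussian bound on `[0, 1/4]`.
  have hgauss : ∀ t ∈ Set.Icc (0 : ℝ) (1 / 4),
      exp (-(a * sin (2 * π * t) ^ 2)) ≤ exp (-(16 * a) * t ^ 2) := by
    rintro t ⟨ht0, ht1⟩
    have hsin : 4 * t ≤ sin (2 * π * t) := by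
      have := mul_le_sin (x := 2 * π * t) (by positivity) (by nlinarith [pi_pos])
      rwa [show 2 / π * (2 * π * t) = 4 * t by field_simp; ring] at this
    have := pow_le_pow_left₀ (by positivity) hsin 2
    rw [exp_le_exp]
    nlinarith
  have hgaussInt : Integrable fun t : ℝ => exp (-(16 * a) * t ^ 2) :=
    integrable_exp_neg_mul_sq (by positivity)
  calc ∫ t in (0 : ℝ)..1, exp (-(a * sin (2 * π * t) ^ 2))
      = 4 * ∫ t in (0 : ℝ)..1 / 4, exp (-(a * sin (2 * π * t) ^ 2)) :=
        integral_comp_sin_sq_eq_four_mul (f := fun x => exp (-(a * x))) (by fun_prop)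
    _ ≤ 4 * ∫ t in (0 : ℝ)..1 / 4, exp (-(16 * a) * t ^ 2) := by
        gcongr
        exact intervalIntegral.integral_mono_on (by norm_num)
          ((by fun_prop : Continuous _).intervalIntegrable _ _) hgaussInt.intervalIntegrable hgauss
    _ ≤ 4 * ∫ t, exp (-(16 * a) * t ^ 2) := by
        rw [intervalIntegral.integral_of_le (by norm_num)]
        exact mul_le_mul_of_nonneg_left
          (setIntegral_le_integral hgaussInt (ae_of_all _ fun t => (exp_pos _).le)) (by norm_num)
    _ = √(π / a) := by
        rw [integral_gaussian, show π / (16 * a) = (π / a) / 4 ^ 2 by ring,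
          sqrt_div' _ (by positivity), sqrt_sq (by norm_num)]
        ring

lemma integral_exp_neg_mul_sin_sq_le_one {a : ℝ} (ha : 0 ≤ a) :
    ∫ t in (0 : ℝ)..1, exp (-(a * sin (2 * π * t) ^ 2)) ≤ 1 := by
  refine (intervalIntegral.integral_mono_on zero_le_one
    ((by fun_prop : Continuous fun t => exp (-(a * sin (2 * π * t) ^ 2))).intervalIntegrable 0 1)
    intervalIntegrable_const fun t _ => exp_le_one_iff.2 (neg_nonpos.2 (by positivity))).trans_eq ?_
  simp

namespace RandomWalk

variable {G : Type*} [AddCommGroup G]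

def convPow (q : G → ℝ≥0∞) : ℕ → G → ℝ≥0∞
  | 0 => ({0} : Set G).indicator 1
  | n + 1 => fun w => ∑' u, convPow q n u * q (w - u)

variable {q : G → ℝ≥0∞}

lemma convPow_add (n m : ℕ) (w : G) :
    convPow q (n + m) w = ∑' u, convPow q n u * convPow q m (w - u) := by
  induction m generalizing w with
  | zero =>
    rw [tsum_eq_single w fun u hu => by simp [convPow, sub_eq_zero, Ne.symm hu]]
    simp [convPow]
  | succ m ih =>
    calc convPow q (n + m + 1) w
        = ∑' u, (∑' v, convPow q n v * convPow q m (u - v)) * q (w - u) := by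
          simp only [convPow, ih]
      _ = ∑' v, ∑' u, convPow q n v * (convPow q m (u - v) * q (w - u)) := by
          simp only [← ENNReal.tsum_mul_right, mul_assoc]
          exact ENNReal.tsum_comm
      _ = ∑' v, convPow q n v * ∑' u, convPow q m u * q (w - v - u) := by
          refine tsum_congr fun v => ?_
          rw [ENNReal.tsum_mul_left, ← (Equiv.addRight v).tsum_eq]
          simp [sub_sub, add_comm]

lemma convPow_neg (hq : ∀ v, q (-v) = q v) (n : ℕ) (w : G) :
    convPow q n (-w) = convPow q n w := by
  induction n generalizing w with
  | zero => by_cases hw : w = 0 <;> simp [convPow, hw]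
  | succ n ih =>
    simp only [convPow]
    rw [← (Equiv.neg G).tsum_eq]
    refine tsum_congr fun u => ?_
    rw [Equiv.neg_apply, ih, ← hq, neg_sub_neg, neg_sub]

lemma tsum_convPow_mul_convPow (hq : ∀ v, q (-v) = q v) (n m : ℕ) :
    ∑' u, convPow q n u * convPow q m u = convPow q (n + m) 0 := by
  simp_rw [convPow_add, zero_sub, convPow_neg hq]

lemma tsum_sq_tsum_convPow (hq : ∀ v, q (-v) = q v) :
    ∑' w, (∑' n, convPow q n w) ^ 2 = ∑' n, ∑' m, convPow q (n + m) 0 := by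
  calc ∑' w, (∑' n, convPow q n w) ^ 2 = ∑' w, ∑' n, ∑' m, convPow q n w * convPow q m w := by
        simp_rw [sq, ← ENNReal.tsum_mul_right, ← ENNReal.tsum_mul_left]
    _ = ∑' n, ∑' m, ∑' w, convPow q n w * convPow q m w := by
        rw [ENNReal.tsum_comm]
        exact tsum_congr fun n => ENNReal.tsum_comm
    _ = ∑' n, ∑' m, convPow q (n + m) 0 := by simp_rw [tsum_convPow_mul_convPow hq]

section Probability

variable [MeasurableSpace G] [MeasurableSingletonClass G] [Countable G]
  {Ω : Type*} [MeasurableSpace Ω] {P : Measure Ω}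

lemma measure_add_eq_tsum {X Y : Ω → G} (hX : Measurable X) (hY : Measurable Y)
    (hXY : IndepFun X Y P) (w : G) :
    P {ω | X ω + Y ω = w} = ∑' u, P {ω | X ω = u} * P {ω | Y ω = w - u} := by
  have hsplit : {ω | X ω + Y ω = w} = ⋃ u, X ⁻¹' {u} ∩ Y ⁻¹' {w - u} := by
    ext ω
    simp [eq_sub_iff_add_eq']
  rw [hsplit, measure_iUnion]
  · exact tsum_congr fun u => hXY.measure_inter_preimage_eq_mul _ _
      (measurableSet_singleton _) (measurableSet_singleton _)
  · intro u u' huu'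
    exact Set.disjoint_left.2 fun ω h h' => huu' (h.1.symm.trans h'.1)
  · exact fun u => (hX (measurableSet_singleton u)).inter (hY (measurableSet_singleton _))

variable [MeasurableAdd₂ G] [IsProbabilityMeasure P] {ξ : ℕ → Ω → G}

lemma measure_sum_eq_convPow (hmeas : ∀ k, Measurable (ξ k)) (hind : iIndepFun ξ P)
    (hlaw : ∀ k v, P {ω | ξ k ω = v} = q v) (s : Finset ℕ) (w : G) :
    P {ω | ∑ k ∈ s, ξ k ω = w} = convPow q #s w := by
  induction s using Finset.induction_on generalizing w with
  | empty => by_cases hw : w = 0 <;> simp [convPow, hw, eq_comm (a := (0 : G))]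
  | insert a s ha ih =>
    have hindep : IndepFun (fun ω => ∑ k ∈ s, ξ k ω) (ξ a) P := by
      convert hind.indepFun_finsetSum_of_notMem hmeas ha using 1
      exact funext fun ω => (Finset.sum_apply ω s ξ).symm
    simp_rw [Finset.sum_insert ha, card_insert_of_notMem ha, add_comm (ξ a _)]
    rw [measure_add_eq_tsum (Finset.measurable_sum s fun k _ => hmeas k) (hmeas a) hindep]
    simp only [convPow, ih, hlaw]

end Probability

end RandomWalk

namespace SimpleRandomWalk

variable {d : ℕ}

def srwLaw (d : ℕ) : (Fin d → ℤ) → ℝ≥0∞ := (unitVecs d).indicator fun _ => (1 : ℝ≥0∞) / (2 * d)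

def unitVec (x : Fin d × ℤˣ) : Fin d → ℤ := Pi.single x.1 (x.2 : ℤ)

lemma unitVecs_eq_range : unitVecs d = Set.range unitVec := by
  ext v
  simp only [unitVecs, Set.mem_ofPred_eq, Set.mem_range, Prod.exists, unitVec]
  constructor
  · rintro ⟨j, rfl | rfl⟩
    · exact ⟨j, 1, by simp⟩
    · exact ⟨j, -1, by simp [Pi.single_neg]⟩
  · rintro ⟨j, s, rfl⟩
    rcases Int.units_eq_one_or s with rfl | rfl
    · exact ⟨j, Or.inl (by simp)⟩
    · exact ⟨j, Or.inr (by simp [Pi.single_neg])⟩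

lemma unitVec_injective : Function.Injective (unitVec (d := d)) := by
  rintro ⟨j, s⟩ ⟨j', s'⟩ h
  have hval := congrFun h j
  obtain rfl : j = j' := by
    by_contra hne
    simp [unitVec, Pi.single_eq_of_ne hne] at hval
  simpa [unitVec, Units.ext_iff] using hval

lemma neg_unitVec (j : Fin d) (s : ℤˣ) : -unitVec (j, s) = unitVec (j, -s) := by
  simp [unitVec, Pi.single_neg]

lemma srwLaw_neg (v : Fin d → ℤ) : srwLaw d (-v) = srwLaw d v := by
  have hneg : ∀ v, v ∈ unitVecs d → -v ∈ unitVecs d := by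
    rw [unitVecs_eq_range]
    rintro _ ⟨⟨j, s⟩, rfl⟩
    exact ⟨(j, -s), (neg_unitVec j s).symm⟩
  by_cases hv : v ∈ unitVecs d
  · simp [srwLaw, hv, hneg v hv]
  · have hv' : -v ∉ unitVecs d := fun h => hv (neg_neg v ▸ hneg _ h)
    simp only [srwLaw, Set.indicator_of_notMem hv, Set.indicator_of_notMem hv']

variable {Ω : Type*} [MeasurableSpace Ω] {P : Measure Ω} {ξ : ℕ → Ω → (Fin d → ℤ)}

lemma measure_hit_le (x : Fin d → ℤ) :
    P {ω | ∃ n, walk ξ x n ω = 0} ≤ ∑' n, P {ω | ∑ k ∈ range n, ξ k ω = -x} := by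
  refine (measure_mono fun ω hω => ?_).trans (measure_iUnion_le _)
  obtain ⟨n, hn⟩ := hω
  exact Set.mem_iUnion.2 ⟨n, eq_neg_of_add_eq_zero_right hn⟩

lemma map_step_eq_sum_dirac (hξ : IsSRW P ξ) (k : ℕ) :
    P.map (ξ k) = (2 * d : ℝ≥0∞)⁻¹ • ∑ x : Fin d × ℤˣ, Measure.dirac (unitVec x) := by
  refine Measure.ext_of_singleton fun v => ?_
  rw [Measure.map_apply (hξ.1 k) (measurableSet_singleton v)]
  change P {ω | ξ k ω = v} = _
  rw [hξ.2.2, unitVecs_eq_range, Measure.smul_apply, Measure.coe_finsetSum, Finset.sum_apply,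
    smul_eq_mul, one_div]
  by_cases hv : v ∈ Set.range unitVec
  · obtain ⟨x, rfl⟩ := hv
    rw [Set.indicator_of_mem (Set.mem_range_self x), Finset.sum_eq_single x]
    · simp
    · intro y _ hyx
      simp [unitVec_injective.ne hyx]
    · simp
  · rw [Set.indicator_of_notMem hv, Finset.sum_eq_zero, mul_zero]
    intro y _
    simpa using Pi.single_eq_of_ne (fun h => hv ⟨y, h⟩) _

lemma integral_comp_step (hξ : IsSRW P ξ) (k : ℕ) (f : (Fin d → ℤ) → ℂ) :
    ∫ ω, f (ξ k ω) ∂P = (2 * d : ℝ)⁻¹ * ∑ x : Fin d × ℤˣ, f (unitVec x) := by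
  rw [← integral_map (hξ.1 k).aemeasurable (measurable_of_countable f).aestronglyMeasurable,
    map_step_eq_sum_dirac hξ, integral_smul_measure, integral_finsetSum_measure]
  · simp [integral_dirac]
  · exact fun x _ => integrable_dirac (by simp)

def torusChar (θ : Fin d → ℝ) (v : Fin d → ℤ) : ℂ := ∏ j, (𝐞 (θ j * v j) : ℂ)

def cosAvg (θ : Fin d → ℝ) : ℝ := (d : ℝ)⁻¹ * ∑ j, cos (2 * π * θ j)

lemma torusChar_add (θ : Fin d → ℝ) (a b : Fin d → ℤ) :
    torusChar θ (a + b) = torusChar θ a * torusChar θ b := by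
  simp [torusChar, mul_add, AddChar.map_add_eq_mul, prod_mul_distrib]

lemma torusChar_zero (θ : Fin d → ℝ) : torusChar θ 0 = 1 := by
  simp [torusChar]

lemma norm_torusChar (θ : Fin d → ℝ) (v : Fin d → ℤ) : ‖torusChar θ v‖ = 1 := by
  simp [torusChar, Circle.norm_coe]

lemma torusChar_unitVec (θ : Fin d → ℝ) (j : Fin d) (s : ℤˣ) :
    torusChar θ (unitVec (j, s)) = 𝐞 (θ j * s) := by
  rw [torusChar, prod_eq_single j (fun i _ hij => by simp [unitVec, Pi.single_eq_of_ne hij])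
    (by simp)]
  simp [unitVec]

lemma continuous_torusChar (v : Fin d → ℤ) : Continuous fun θ : Fin d → ℝ => torusChar θ v := by
  unfold torusChar
  fun_prop

lemma fourierChar_add_fourierChar_neg (x : ℝ) : (𝐞 x : ℂ) + 𝐞 (-x) = 2 * cos (2 * π * x) := by
  rw [fourierChar_apply, fourierChar_apply, Complex.ofReal_cos, Complex.two_cos]
  push_cast
  ring_nf

lemma integral_torusChar_step (hξ : IsSRW P ξ) (hd : d ≠ 0) (θ : Fin d → ℝ) (k : ℕ) :
    ∫ ω, torusChar θ (ξ k ω) ∂P = cosAvg θ := by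
  have hunits : ∀ j, ∑ s : ℤˣ, torusChar θ (unitVec (j, s)) = 2 * cos (2 * π * θ j) := by
    intro j
    rw [← fourierChar_add_fourierChar_neg, show (univ : Finset ℤˣ) = {1, -1} from rfl,
      sum_pair (by decide), torusChar_unitVec, torusChar_unitVec]
    simp
  rw [integral_comp_step hξ, Fintype.sum_prod_type, sum_congr rfl fun j _ => hunits j, cosAvg]
  push_cast
  field_simp
  rw [mul_sum]

variable [IsProbabilityMeasure P]

lemma integral_torusChar_walk (hξ : IsSRW P ξ) (hd : d ≠ 0) (θ : Fin d → ℝ) (n : ℕ) :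
    ∫ ω, torusChar θ (∑ k ∈ range n, ξ k ω) ∂P = cosAvg θ ^ n := by
  induction n with
  | zero => simp [torusChar_zero]
  | succ n ih =>
    have hindep : IndepFun (fun ω => ∑ k ∈ range n, ξ k ω) (ξ n) P := by
      convert hξ.2.1.indepFun_finsetSum_of_notMem hξ.1 notMem_range_self using 1
      exact funext fun ω => (Finset.sum_apply ω _ ξ).symm
    simp_rw [sum_range_succ, torusChar_add]
    have hmul := (hindep.comp (measurable_of_countable (torusChar θ))
      (measurable_of_countable (torusChar θ))).integral_fun_mul_eq_mul_integral
      ((measurable_of_countable _).comp (measurable_sum _ fun k _ => hξ.1 k)).aestronglyMeasurable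
      ((measurable_of_countable _).comp (hξ.1 n)).aestronglyMeasurable
    simp only [Function.comp_apply] at hmul
    rw [hmul, ih, integral_torusChar_step hξ hd, pow_succ]

def cubeMeasure (d : ℕ) : Measure (Fin d → ℝ) :=
  Measure.pi fun _ => volume.restrict (Set.Ioc (0 : ℝ) 1)

instance : IsProbabilityMeasure (cubeMeasure d) := by
  have : IsProbabilityMeasure (volume.restrict (Set.Ioc (0 : ℝ) 1)) := ⟨by simp⟩
  unfold cubeMeasure
  infer_instance

lemma integral_torusChar_cubeMeasure (v : Fin d → ℤ) :
    ∫ θ, torusChar θ v ∂cubeMeasure d = if v = 0 then 1 else 0 := by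
  simp only [cubeMeasure, torusChar]
  rw [integral_fintype_prod_eq_prod (fun j t => (𝐞 (t * v j) : ℂ))]
  simp_rw [integral_fourierChar_mul_int]
  split_ifs with hv
  · simp [hv]
  · obtain ⟨j, hj⟩ := Function.ne_iff.1 hv
    exact prod_eq_zero (mem_univ j) (if_neg hj)

lemma measureReal_eq_zero_eq_integral_torusChar {T : Ω → Fin d → ℤ} (hT : Measurable T) :
    (P.real {ω | T ω = 0} : ℂ) = ∫ θ, ∫ ω, torusChar θ (T ω) ∂P ∂cubeMeasure d := by
  have hchar : Measurable fun p : (Fin d → ℝ) × (Fin d → ℤ) => torusChar p.1 p.2 :=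
    measurable_from_prod_countable_left fun v => (continuous_torusChar v).measurable
  have hint : Integrable (fun p : (Fin d → ℝ) × Ω => torusChar p.1 (T p.2))
      ((cubeMeasure d).prod P) :=
    .of_bound (hchar.comp (measurable_fst.prodMk (hT.comp measurable_snd))).aestronglyMeasurable 1
      (ae_of_all _ fun p => (norm_torusChar _ _).le)
  rw [integral_integral_swap hint]
  simp_rw [integral_torusChar_cubeMeasure]
  rw [← integral_indicator_one (s := {ω | T ω = 0}) (hT (measurableSet_singleton 0)),
    ← integral_complex_ofReal]
  congr with ω
  by_cases h : T ω = 0 <;> simp [h]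

lemma measureReal_walk_eq_zero_eq_integral (hξ : IsSRW P ξ) (hd : d ≠ 0) (n : ℕ) :
    P.real {ω | ∑ k ∈ range n, ξ k ω = 0} = ∫ θ, cosAvg θ ^ n ∂cubeMeasure d := by
  have h := measureReal_eq_zero_eq_integral_torusChar (P := P)
    (Finset.measurable_sum (range n) fun k _ => hξ.1 k)
  simp_rw [integral_torusChar_walk hξ hd] at h
  rw [← Complex.ofReal_inj, h, ← integral_complex_ofReal]
  simp only [Complex.ofReal_pow]

lemma continuous_cosAvg : Continuous (cosAvg (d := d)) := by
  unfold cosAvg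
  fun_prop

lemma sq_cosAvg_le (hd : d ≠ 0) (θ : Fin d → ℝ) :
    cosAvg θ ^ 2 ≤ 1 - (d : ℝ)⁻¹ * ∑ j, sin (2 * π * θ j) ^ 2 := by
  have hcs : (∑ j, cos (2 * π * θ j)) ^ 2 ≤ d * ∑ j, cos (2 * π * θ j) ^ 2 := by
    simpa using sq_sum_le_card_mul_sum_sq (s := univ) (f := fun j => cos (2 * π * θ j))
  have hsum : ∑ j, cos (2 * π * θ j) ^ 2 = d - ∑ j, sin (2 * π * θ j) ^ 2 := by
    simp [cos_sq', sum_sub_distrib]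
  calc cosAvg θ ^ 2 = (d : ℝ)⁻¹ ^ 2 * (∑ j, cos (2 * π * θ j)) ^ 2 := by rw [cosAvg, mul_pow]
    _ ≤ (d : ℝ)⁻¹ ^ 2 * (d * (d - ∑ j, sin (2 * π * θ j) ^ 2)) := by rw [← hsum]; gcongr
    _ = 1 - (d : ℝ)⁻¹ * ∑ j, sin (2 * π * θ j) ^ 2 := by field_simp

lemma abs_cosAvg_le_one (hd : d ≠ 0) (θ : Fin d → ℝ) : |cosAvg θ| ≤ 1 := by
  rw [← sq_le_one_iff_abs_le_one]
  have : 0 ≤ (d : ℝ)⁻¹ * ∑ j, sin (2 * π * θ j) ^ 2 := by positivity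
  linarith [sq_cosAvg_le hd θ]

lemma cosAvg_pow_le_prod_exp (hd : d ≠ 0) (θ : Fin d → ℝ) (m : ℕ) :
    cosAvg θ ^ (2 * m) ≤ ∏ j, exp (-(m / d * sin (2 * π * θ j) ^ 2)) := by
  calc cosAvg θ ^ (2 * m) = (cosAvg θ ^ 2) ^ m := pow_mul _ _ _
    _ ≤ exp (-((d : ℝ)⁻¹ * ∑ j, sin (2 * π * θ j) ^ 2)) ^ m := by
        gcongr
        exact (sq_cosAvg_le hd θ).trans (by linarith [add_one_le_exp (-((d : ℝ)⁻¹ *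
          ∑ j, sin (2 * π * θ j) ^ 2))])
    _ = ∏ j, exp (-(m / d * sin (2 * π * θ j) ^ 2)) := by
        rw [← exp_nat_mul, ← exp_sum, mul_neg, sum_neg_distrib, mul_sum, mul_sum]
        congr 2
        refine sum_congr rfl fun j _ => ?_
        ring

lemma integrable_cosAvg_pow (hd : d ≠ 0) (n : ℕ) :
    Integrable (fun θ => cosAvg θ ^ n) (cubeMeasure d) :=
  .of_bound (continuous_cosAvg.pow _).aestronglyMeasurable 1 (ae_of_all _ fun θ => by
    simpa [abs_pow] using pow_le_one₀ (abs_nonneg _) (abs_cosAvg_le_one hd θ))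

lemma integral_cosAvg_pow_le (hd : d ≠ 0) (m : ℕ) :
    ∫ θ, cosAvg θ ^ (2 * m) ∂cubeMeasure d
      ≤ (∫ t in (0 : ℝ)..1, exp (-(m / d * sin (2 * π * t) ^ 2))) ^ d := by
  have hexp : Integrable (fun θ : Fin d → ℝ => ∏ j, exp (-(m / d * sin (2 * π * θ j) ^ 2)))
      (cubeMeasure d) :=
    .of_bound (by fun_prop : Continuous _).aestronglyMeasurable 1 (ae_of_all _ fun θ => by
      rw [← exp_sum, norm_of_nonneg (exp_pos _).le, exp_le_one_iff, sum_neg_distrib, neg_nonpos]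
      positivity)
  refine (integral_mono (integrable_cosAvg_pow hd _) hexp
    (cosAvg_pow_le_prod_exp hd · m)).trans_eq ?_
  rw [cubeMeasure, integral_fintype_prod_eq_pow (fun t => exp (-(m / d * sin (2 * π * t) ^ 2))),
    intervalIntegral.integral_of_le zero_le_one, Fintype.card_fin]

lemma measureReal_walk_eq_zero_le_pow (hξ : IsSRW P ξ) (hd : d ≠ 0) (k : ℕ) :
    P.real {ω | ∑ j ∈ range k, ξ j ω = 0}
      ≤ (∫ t in (0 : ℝ)..1, exp (-((k / 2 : ℕ) / d * sin (2 * π * t) ^ 2))) ^ d := by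
  calc P.real {ω | ∑ j ∈ range k, ξ j ω = 0} = ∫ θ, cosAvg θ ^ k ∂cubeMeasure d :=
        measureReal_walk_eq_zero_eq_integral hξ hd k
    _ ≤ ∫ θ, cosAvg θ ^ (2 * (k / 2)) ∂cubeMeasure d := by
        refine integral_mono (integrable_cosAvg_pow hd _) (integrable_cosAvg_pow hd _) fun θ => ?_
        rw [← (even_two_mul _).pow_abs]
        exact (le_abs_self _).trans ((abs_pow _ _).trans_le
          (pow_le_pow_of_le_one (abs_nonneg _) (abs_cosAvg_le_one hd θ) (by omega)))
    _ ≤ _ := integral_cosAvg_pow_le hd (k / 2)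

lemma measureReal_walk_eq_zero_le (hξ : IsSRW P ξ) (hd : 5 ≤ d) (k : ℕ) :
    P.real {ω | ∑ j ∈ range k, ξ j ω = 0}
      ≤ (4 * π * d) ^ (5 / 2 : ℝ) * ((k : ℝ) + 1) ^ (-(5 / 2) : ℝ) := by
  have hd0 : d ≠ 0 := by omega
  have hk0 : (0 : ℝ) < k + 1 := by positivity
  rw [rpow_neg hk0.le, ← div_eq_mul_inv, ← div_rpow (by positivity) hk0.le]
  rcases lt_or_ge k 2 with hk | hk
  · refine measureReal_le_one.trans (one_le_rpow ?_ (by norm_num))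
    have hk2 : (k : ℝ) + 1 ≤ 2 := by exact_mod_cast hk
    have hd1 : (1 : ℝ) ≤ d := by exact_mod_cast Nat.one_le_iff_ne_zero.2 hd0
    rw [one_le_div hk0]
    nlinarith [pi_gt_three]
  set m := k / 2
  have hm1 : (1 : ℝ) ≤ m := by exact_mod_cast (by omega : 1 ≤ m)
  have hkm : (k : ℝ) + 1 ≤ 4 * m := by exact_mod_cast (by omega : k + 1 ≤ 4 * m)
  set J := ∫ t in (0 : ℝ)..1, exp (-(m / d * sin (2 * π * t) ^ 2))
  have hJ0 : 0 ≤ J := intervalIntegral.integral_nonneg zero_le_one fun t _ => (exp_pos _).le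
  calc P.real {ω | ∑ j ∈ range k, ξ j ω = 0} ≤ J ^ d := measureReal_walk_eq_zero_le_pow hξ hd0 k
    _ ≤ J ^ 5 := pow_le_pow_of_le_one hJ0 (integral_exp_neg_mul_sin_sq_le_one (by positivity)) hd
    _ ≤ √(π / (m / d)) ^ 5 := by
        gcongr
        exact integral_exp_neg_mul_sin_sq_le (by positivity)
    _ = (π * d / m) ^ (5 / 2 : ℝ) := by
        rw [div_div_eq_mul_div, sqrt_eq_rpow, ← rpow_natCast, ← rpow_mul (by positivity)]
        norm_num
    _ ≤ (4 * π * d / (k + 1)) ^ (5 / 2 : ℝ) := by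
        gcongr ?_ ^ _
        rw [div_le_div_iff₀ (by positivity) hk0]
        nlinarith [mul_le_mul_of_nonneg_left hkm (by positivity : 0 ≤ π * d)]

end SimpleRandomWalk

open RandomWalk SimpleRandomWalk in
/-- for `d ≥ 5`, `∑_{i ∈ ℤ^d} P^i(∃ n ≥ 0, S_n = 0)² < ∞`. -/
theorem stmt_0 (d : ℕ) (hd : 5 ≤ d)
    (Ω : Type) [MeasurableSpace Ω] (P : Measure Ω) [IsProbabilityMeasure P]
    (ξ : ℕ → Ω → (Fin d → ℤ)) (hξ : IsSRW P ξ) :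
    ∑' i : Fin d → ℤ, (P {ω | ∃ n : ℕ, walk ξ i n ω = 0}) ^ 2 < ⊤ := by
  have hwalk : ∀ n w, P {ω | ∑ k ∈ range n, ξ k ω = w} = convPow (srwLaw d) n w := fun n w => by
    rw [measure_sum_eq_convPow hξ.1 hξ.2.1 hξ.2.2 (range n) w, card_range]
    rfl
  calc ∑' i, P {ω | ∃ n, walk ξ i n ω = 0} ^ 2
      ≤ ∑' i, (∑' n, convPow (srwLaw d) n i) ^ 2 := by
        refine ENNReal.tsum_le_tsum fun i => pow_le_pow_left' ((measure_hit_le i).trans_eq ?_) 2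
        simp_rw [hwalk, convPow_neg srwLaw_neg]
    _ = ∑' n, ∑' m, convPow (srwLaw d) (n + m) 0 := tsum_sq_tsum_convPow srwLaw_neg
    _ < ⊤ := by
        refine tsum_tsum_add_lt_top (f := (convPow (srwLaw d) · 0))
          (C := ENNReal.ofReal ((4 * π * d) ^ (5 / 2 : ℝ)))
          ENNReal.ofReal_ne_top (by norm_num : (2 : ℝ) < 5 / 2) fun k => ?_
        rw [← hwalk, ← ofReal_measureReal, ← ENNReal.ofReal_mul (by positivity)]
        exact ENNReal.ofReal_le_ofReal (measureReal_walk_eq_zero_le hξ hd k)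
end
end

section
/- Equality case of the convexity of (x,y) ↦ (√x − √y)²: if a, b, a', b' ≥ 0 and for some t ∈ (0,1) one has (√(t a + (1−t) a') − √(t b + (1−t) b'))² = t (√a − √b)² + (1−t) (√a' − √b')², then a b' = a' b. -/
noncomputable section

/-- equality case of the convexity of `(x, y) ↦ (√x - √y)²`: if equality
holds at some `t ∈ (0,1)`, then `a b' = a' b`. -/
theorem stmt_17 (a b a' b' t : ℝ) (ha : 0 ≤ a) (hb : 0 ≤ b) (ha' : 0 ≤ a')
    (hb' : 0 ≤ b') (ht0 : 0 < t) (ht1 : t < 1)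
    (heq : (Real.sqrt (t * a + (1 - t) * a') - Real.sqrt (t * b + (1 - t) * b')) ^ 2
      = t * (Real.sqrt a - Real.sqrt b) ^ 2
        + (1 - t) * (Real.sqrt a' - Real.sqrt b') ^ 2) :
    a * b' = a' * b := by
  have ht1' : (0:ℝ) ≤ 1 - t := by linarith
  have hA : (0:ℝ) ≤ t * a + (1 - t) * a' :=
    add_nonneg (mul_nonneg ht0.le ha) (mul_nonneg ht1' ha')
  have hB : (0:ℝ) ≤ t * b + (1 - t) * b' :=
    add_nonneg (mul_nonneg ht0.le hb) (mul_nonneg ht1' hb')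
  rw [sub_sq, sub_sq, sub_sq, Real.sq_sqrt hA, Real.sq_sqrt hB, Real.sq_sqrt ha,
    Real.sq_sqrt hb, Real.sq_sqrt ha', Real.sq_sqrt hb'] at heq
  have h1 : Real.sqrt (t * a + (1 - t) * a') * Real.sqrt (t * b + (1 - t) * b')
      = t * (Real.sqrt a * Real.sqrt b) + (1 - t) * (Real.sqrt a' * Real.sqrt b') := by
    linarith
  have h2 : (t * a + (1 - t) * a') * (t * b + (1 - t) * b')
      = (t * (Real.sqrt a * Real.sqrt b) + (1 - t) * (Real.sqrt a' * Real.sqrt b')) ^ 2 := by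
    rw [← h1, mul_pow, Real.sq_sqrt hA, Real.sq_sqrt hB]
  have hsa := Real.sq_sqrt ha
  have hsb := Real.sq_sqrt hb
  have hsa' := Real.sq_sqrt ha'
  have hsb' := Real.sq_sqrt hb'
  have htt : 0 < t * (1 - t) := mul_pos ht0 (by linarith)
  have h2' : (t * Real.sqrt a ^ 2 + (1 - t) * Real.sqrt a' ^ 2)
      * (t * Real.sqrt b ^ 2 + (1 - t) * Real.sqrt b' ^ 2)
      = (t * (Real.sqrt a * Real.sqrt b) + (1 - t) * (Real.sqrt a' * Real.sqrt b')) ^ 2 := by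
    rw [hsa, hsb, hsa', hsb']; exact h2
  have h0 : (Real.sqrt a * Real.sqrt b' - Real.sqrt a' * Real.sqrt b) ^ 2 = 0 := by
    have hkey : t * (1 - t) * ((Real.sqrt a * Real.sqrt b' - Real.sqrt a' * Real.sqrt b) ^ 2) = 0 := by
      linear_combination h2'
    have := mul_eq_zero.mp hkey
    rcases this with h | h
    · exact absurd h (ne_of_gt htt)
    · exact h
  have hp : Real.sqrt a * Real.sqrt b' = Real.sqrt a' * Real.sqrt b :=
    sub_eq_zero.mp (pow_eq_zero_iff two_ne_zero |>.mp h0)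
  calc a * b' = (Real.sqrt a * Real.sqrt b') ^ 2 := by rw [mul_pow, hsa, hsb']
    _ = (Real.sqrt a' * Real.sqrt b) ^ 2 := by rw [hp]
    _ = a' * b := by rw [mul_pow, hsa', hsb]

end
end

section
/- Let μ be a nonzero finite Borel measure on ℝ whose support is bounded below, let λ := inf(supp μ), and set L(t) := ∫ e^{−s t} dμ(s) for t ≥ 0. Then the following are equivalent: (i) sup_{t>0} e^{−λ t}/L(t) < ∞; (ii) sup_{t>0} L(2t)/L(t)² < ∞; (iii) μ({λ}) > 0. Moreover, if these conditions hold, then lim_{t→∞} e^{−λ t}/L(t) = 1/μ({λ}) and lim_{t→∞} L(2t)/L(t)² = 1/μ({λ}). -/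
/-!
Write `L(t) = e^{-λt} g(t)` with `g(t) = ∫ e^{(λ-s)t} dμ(s)`. As `μ` lives on `[λ, ∞)`, dominated
convergence gives `g(t) → μ{λ}`, and `μ{λ} ≤ g(t) ≤ μ(ℝ)`; this yields (iii) ⇒ (i) ⇒ (ii) and both
limits. For (ii) ⇒ (iii), suppose `μ{λ} = 0` and `g(2t) ≤ C g(t)²`. Pick `r > λ` with
`C μ(-∞, r) ≤ 1/4`; by Cauchy–Schwarz the part of `g(t)` coming from `(-∞, r)` is at most
`(μ(-∞, r) g(2t))^{1/2} ≤ g(t)/2`, so `g(t) ≤ 2 μ(ℝ) e^{(λ-r)t}`. This contradicts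
`g(t) ≥ μ(-∞, r') e^{(λ-r')t}` for `λ < r' < r`, where `μ(-∞, r') > 0` because `λ ∈ supp μ`.
-/

open MeasureTheory Filter

noncomputable section

/-- The topological support of a Borel measure on `ℝ`: the set of points all of whose open
neighborhoods have positive measure. -/
def msupp (μ : Measure ℝ) : Set ℝ :=
  {x | ∀ U : Set ℝ, IsOpen U → x ∈ U → 0 < μ U}

/-- The Laplace-type transform `L(t) = ∫ e^{-s t} dμ(s)`. -/
def laplace (μ : Measure ℝ) (t : ℝ) : ℝ :=
  ∫ s, Real.exp (-s * t) ∂μ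

open Topology Set

theorem msupp_eq_support (μ : Measure ℝ) : msupp μ = μ.support := by
  ext x
  simp only [msupp, Measure.support_eq_forall_isOpen, mem_ofPred_eq]
  exact forall_congr' fun _ => imp.swap

theorem tendsto_measureReal_Iio_nhdsGT (μ : Measure ℝ) [IsFiniteMeasure μ] (a : ℝ) :
    Tendsto (fun r => μ.real (Iio r)) (𝓝[>] a) (𝓝 (μ.real (Iic a))) := by
  have h : ⋂ r > a, Iio r = Iic a := by
    ext x
    simp [forall_gt_iff_le]
  rw [← h]
  exact (ENNReal.tendsto_toReal (measure_ne_top μ _)).comp <|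
    tendsto_measure_biInter_gt (fun _ _ => measurableSet_Iio.nullMeasurableSet)
      (fun _ _ _ hij => Iio_subset_Iio hij) ⟨a + 1, by linarith, measure_ne_top μ _⟩

theorem sq_integral_le_measureReal_univ_mul_integral_sq {α : Type*} [MeasurableSpace α]
    {ν : Measure α} [IsFiniteMeasure ν] {f : α → ℝ} (hf : MemLp f 2 ν) :
    (∫ x, f x ∂ν) ^ 2 ≤ ν.real univ * ∫ x, f x ^ 2 ∂ν := by
  have hf1 : Integrable f ν := hf.integrable one_le_two
  have hf2 : Integrable (fun x => f x ^ 2) ν := hf.integrable_sq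
  have hquad : ∀ y : ℝ,
      0 ≤ ν.real univ * (y * y) + (-2 * ∫ x, f x ∂ν) * y + ∫ x, f x ^ 2 ∂ν := by
    intro y
    have hexpand : ∫ x, (f x - y) ^ 2 ∂ν
        = ν.real univ * (y * y) + (-2 * ∫ x, f x ∂ν) * y + ∫ x, f x ^ 2 ∂ν := by
      simp_rw [sub_sq]
      have hf1' : Integrable (fun x => 2 * f x * y) ν := (hf1.const_mul 2).mul_const y
      rw [integral_add (f := fun x => f x ^ 2 - 2 * f x * y) (hf2.sub hf1') (integrable_const _),
        integral_sub hf2 hf1', integral_mul_const, integral_const_mul, integral_const, smul_eq_mul]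
      ring
    exact hexpand ▸ integral_nonneg fun _ => sq_nonneg _
  have hdiscrim := discrim_le_zero hquad
  rw [discrim] at hdiscrim
  linarith

def shiftedLaplace (μ : Measure ℝ) (l t : ℝ) : ℝ :=
  ∫ s, Real.exp ((l - s) * t) ∂μ

theorem laplace_eq_exp_mul_shiftedLaplace (μ : Measure ℝ) (l t : ℝ) :
    laplace μ t = Real.exp (-l * t) * shiftedLaplace μ l t := by
  rw [laplace, shiftedLaplace, ← integral_const_mul]
  congr 1 with s
  rw [← Real.exp_add]
  ring_nf

theorem exp_neg_mul_div_laplace (μ : Measure ℝ) (l t : ℝ) :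
    Real.exp (-l * t) / laplace μ t = 1 / shiftedLaplace μ l t := by
  rw [laplace_eq_exp_mul_shiftedLaplace μ l, div_mul_cancel_left₀ (Real.exp_ne_zero _), one_div]

theorem laplace_two_mul_div_sq (μ : Measure ℝ) (l t : ℝ) :
    laplace μ (2 * t) / laplace μ t ^ 2
      = shiftedLaplace μ l (2 * t) / shiftedLaplace μ l t ^ 2 := by
  have h : Real.exp (-l * (2 * t)) = Real.exp (-l * t) ^ 2 := by
    rw [sq, ← Real.exp_add]
    ring_nf
  rw [laplace_eq_exp_mul_shiftedLaplace μ l, laplace_eq_exp_mul_shiftedLaplace μ l, mul_pow, h,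
    mul_div_mul_left _ _ (pow_ne_zero 2 (Real.exp_ne_zero _))]

theorem shiftedLaplace_nonneg (μ : Measure ℝ) (l t : ℝ) : 0 ≤ shiftedLaplace μ l t :=
  integral_nonneg fun _ => (Real.exp_pos _).le

theorem exp_sub_mul_le_one {l s t : ℝ} (hs : l ≤ s) (ht : 0 ≤ t) : Real.exp ((l - s) * t) ≤ 1 :=
  Real.exp_le_one_iff.2 (mul_nonpos_of_nonpos_of_nonneg (by linarith) ht)

section ShiftedLaplace

variable {μ : Measure ℝ} [IsFiniteMeasure μ] {l t : ℝ}

theorem integrable_exp_sub_mul (hl : ∀ᵐ s ∂μ, l ≤ s) (ht : 0 ≤ t) :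
    Integrable (fun s => Real.exp ((l - s) * t)) μ :=
  Integrable.of_bound (by fun_prop) 1 <| hl.mono fun s hs => by
    rw [Real.norm_of_nonneg (Real.exp_pos _).le]
    exact exp_sub_mul_le_one hs ht

theorem shiftedLaplace_le_measureReal_univ (hl : ∀ᵐ s ∂μ, l ≤ s) (ht : 0 ≤ t) :
    shiftedLaplace μ l t ≤ μ.real univ :=
  calc shiftedLaplace μ l t ≤ ∫ _, (1 : ℝ) ∂μ :=
        integral_mono_ae (integrable_exp_sub_mul hl ht) (integrable_const 1)
          (hl.mono fun _ hs => exp_sub_mul_le_one hs ht)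
    _ = μ.real univ := by simp

theorem exp_mul_measureReal_le_shiftedLaplace (hl : ∀ᵐ s ∂μ, l ≤ s) (ht : 0 ≤ t) {S : Set ℝ}
    (hS : MeasurableSet S) {r : ℝ} (hSr : S ⊆ Iic r) :
    Real.exp ((l - r) * t) * μ.real S ≤ shiftedLaplace μ l t :=
  calc Real.exp ((l - r) * t) * μ.real S ≤ ∫ s in S, Real.exp ((l - s) * t) ∂μ :=
        setIntegral_ge_of_const_le_real hS (measure_ne_top μ S)
          (fun s hs => Real.exp_le_exp.2 (mul_le_mul_of_nonneg_right
            (by linarith [mem_Iic.1 (hSr hs)]) ht))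
          (integrable_exp_sub_mul hl ht).integrableOn
    _ ≤ shiftedLaplace μ l t := setIntegral_le_integral (integrable_exp_sub_mul hl ht)
        (Eventually.of_forall fun _ => (Real.exp_pos _).le)

theorem measureReal_singleton_le_shiftedLaplace (hl : ∀ᵐ s ∂μ, l ≤ s) (ht : 0 ≤ t) :
    μ.real {l} ≤ shiftedLaplace μ l t := by
  simpa using exp_mul_measureReal_le_shiftedLaplace hl ht (measurableSet_singleton l)
    (singleton_subset_iff.2 self_mem_Iic)

theorem tendsto_shiftedLaplace_atTop (hl : ∀ᵐ s ∂μ, l ≤ s) :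
    Tendsto (shiftedLaplace μ l) atTop (𝓝 (μ.real {l})) := by
  rw [← integral_indicator_one (measurableSet_singleton l)]
  refine tendsto_integral_filter_of_dominated_convergence (fun _ => 1)
    (Eventually.of_forall fun _ => by fun_prop) ?_ (integrable_const 1) ?_
  · filter_upwards [eventually_ge_atTop 0] with t ht
    filter_upwards [hl] with s hs
    rw [Real.norm_of_nonneg (Real.exp_pos _).le]
    exact exp_sub_mul_le_one hs ht
  · filter_upwards [hl] with s hs
    rcases hs.eq_or_lt with rfl | hlt
    · simp
    · rw [indicator_of_notMem (mem_singleton_iff.not.2 hlt.ne')]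
      exact Real.tendsto_exp_atBot.comp (tendsto_id.const_mul_atTop_of_neg (sub_neg.2 hlt))

theorem shiftedLaplace_two_mul_div_sq_le (hl : ∀ᵐ s ∂μ, l ≤ s) {C : ℝ}
    (hC : ∀ t > 0, 1 / shiftedLaplace μ l t ≤ C) (ht : 0 < t) :
    shiftedLaplace μ l (2 * t) / shiftedLaplace μ l t ^ 2 ≤ μ.real univ * C ^ 2 :=
  calc shiftedLaplace μ l (2 * t) / shiftedLaplace μ l t ^ 2
      = shiftedLaplace μ l (2 * t) * (1 / shiftedLaplace μ l t) ^ 2 := by ring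
    _ ≤ μ.real univ * C ^ 2 :=
      mul_le_mul (shiftedLaplace_le_measureReal_univ hl (by linarith))
        (pow_le_pow_left₀ (one_div_nonneg.2 (shiftedLaplace_nonneg μ l t)) (hC t ht) 2)
        (by positivity) measureReal_nonneg

theorem shiftedLaplace_le_of_doubling (hl : ∀ᵐ s ∂μ, l ≤ s) (ht : 0 ≤ t) {C r : ℝ}
    (hCr : C * μ.real (Iio r) ≤ 1 / 4)
    (hdbl : shiftedLaplace μ l (2 * t) ≤ C * shiftedLaplace μ l t ^ 2) :
    shiftedLaplace μ l t ≤ 2 * μ.real univ * Real.exp ((l - r) * t) := by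
  have hint := integrable_exp_sub_mul hl ht
  have hsplit : shiftedLaplace μ l t = (∫ s in Iio r, Real.exp ((l - s) * t) ∂μ)
      + ∫ s in Ici r, Real.exp ((l - s) * t) ∂μ := by
    rw [← compl_Iio, integral_add_compl measurableSet_Iio hint, shiftedLaplace]
  have htail : ∫ s in Ici r, Real.exp ((l - s) * t) ∂μ ≤ μ.real univ * Real.exp ((l - r) * t) :=
    calc ∫ s in Ici r, Real.exp ((l - s) * t) ∂μ ≤ ∫ _ in Ici r, Real.exp ((l - r) * t) ∂μ :=
          setIntegral_mono_on hint.integrableOn (integrableOn_const (measure_ne_top μ _))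
            measurableSet_Ici fun s hs => Real.exp_le_exp.2
              (mul_le_mul_of_nonneg_right (by linarith [mem_Ici.1 hs]) ht)
      _ ≤ μ.real univ * Real.exp ((l - r) * t) := by
          rw [setIntegral_const, smul_eq_mul]
          exact mul_le_mul_of_nonneg_right (measureReal_mono (subset_univ _))
            (Real.exp_pos _).le
  have hsq : ∀ s, Real.exp ((l - s) * t) ^ 2 = Real.exp ((l - s) * (2 * t)) := fun s => by
    rw [sq, ← Real.exp_add]
    ring_nf
  have hhead : (∫ s in Iio r, Real.exp ((l - s) * t) ∂μ) ^ 2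
      ≤ (shiftedLaplace μ l t / 2) ^ 2 :=
    calc (∫ s in Iio r, Real.exp ((l - s) * t) ∂μ) ^ 2
        ≤ μ.real (Iio r) * ∫ s in Iio r, Real.exp ((l - s) * (2 * t)) ∂μ := by
          have hmem : MemLp (fun s => Real.exp ((l - s) * t)) 2 (μ.restrict (Iio r)) :=
            (memLp_two_iff_integrable_sq (by fun_prop)).2 <| by
              simpa only [hsq] using (integrable_exp_sub_mul hl (by linarith)).restrict
          simpa only [measureReal_restrict_apply_univ, hsq]
            using sq_integral_le_measureReal_univ_mul_integral_sq hmem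
      _ ≤ μ.real (Iio r) * (C * shiftedLaplace μ l t ^ 2) :=
          mul_le_mul_of_nonneg_left ((setIntegral_le_integral
            (integrable_exp_sub_mul hl (by linarith))
            (Eventually.of_forall fun _ => (Real.exp_pos _).le)).trans hdbl) measureReal_nonneg
      _ ≤ (shiftedLaplace μ l t / 2) ^ 2 := by
          nlinarith [sq_nonneg (shiftedLaplace μ l t)]
  linarith [le_of_sq_le_sq hhead (div_nonneg (shiftedLaplace_nonneg μ l t) zero_le_two)]

theorem measure_singleton_pos_of_doubling (hl : ∀ᵐ s ∂μ, l ≤ s) (hmem : l ∈ μ.support) {C : ℝ}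
    (hC : ∀ t > 0, shiftedLaplace μ l (2 * t) / shiftedLaplace μ l t ^ 2 ≤ C) :
    0 < μ {l} := by
  by_contra! h0
  have hIic : μ (Iic l) = 0 := by
    rw [← Iio_union_right]
    refine measure_union_null ?_ (nonpos_iff_eq_zero.1 h0)
    rw [ae_iff] at hl
    simpa only [not_le, Iio_def] using hl
  have hsmall : Tendsto (fun r => C * μ.real (Iio r)) (𝓝[>] l) (𝓝 0) := by
    simpa [Measure.real_def, hIic] using (tendsto_measureReal_Iio_nhdsGT μ l).const_mul C
  obtain ⟨r, hCr, hlr⟩ :=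
    ((hsmall.eventually (ge_mem_nhds (by norm_num : (0 : ℝ) < 1 / 4))).and
      self_mem_nhdsWithin).exists
  obtain ⟨r', hlr', hr'r⟩ := exists_between hlr
  have hpos : 0 < μ.real (Iio r') := ENNReal.toReal_pos
    ((Measure.mem_support_iff_forall l).1 hmem _ (Iio_mem_nhds hlr')).ne'
    (measure_ne_top μ _)
  have hbound : ∀ t > 0, μ.real (Iio r') ≤ 2 * μ.real univ * Real.exp ((r' - r) * t) := by
    intro t ht
    have hlow := exp_mul_measureReal_le_shiftedLaplace hl ht.le measurableSet_Iio
      (Iio_subset_Iic_self : Iio r' ⊆ Iic r')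
    have hgpos : 0 < shiftedLaplace μ l t := (mul_pos (Real.exp_pos _) hpos).trans_le hlow
    have hup := shiftedLaplace_le_of_doubling hl ht.le hCr
      ((div_le_iff₀ (pow_pos hgpos 2)).1 (hC t ht))
    have hexp : Real.exp ((l - r) * t) = Real.exp ((l - r') * t) * Real.exp ((r' - r) * t) := by
      rw [← Real.exp_add]
      ring_nf
    rw [hexp] at hup
    exact le_of_mul_le_mul_left (by linarith) (Real.exp_pos ((l - r') * t))
  have hdecay : Tendsto (fun t => 2 * μ.real univ * Real.exp ((r' - r) * t)) atTop (𝓝 0) := by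
    simpa using (Real.tendsto_exp_atBot.comp
      (tendsto_id.const_mul_atTop_of_neg (sub_neg.2 hr'r))).const_mul
      (2 * μ.real univ)
  obtain ⟨t, hlt, ht⟩ :=
    ((hdecay.eventually (gt_mem_nhds hpos)).and (eventually_gt_atTop 0)).exists
  exact (hbound t ht).not_gt hlt

end ShiftedLaplace

/-- with `λ = inf (supp μ)` and `L(t) = ∫ e^{-s t} dμ(s)`, the conditions
(i) `sup_{t>0} e^{-λ t}/L(t) < ∞`, (ii) `sup_{t>0} L(2t)/L(t)² < ∞` and (iii) `μ({λ}) > 0`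
are equivalent; moreover if they hold then `e^{-λ t}/L(t) → 1/μ({λ})` and
`L(2t)/L(t)² → 1/μ({λ})` as `t → ∞`. -/
theorem stmt_19 (μ : Measure ℝ) [IsFiniteMeasure μ] (hμ : μ ≠ 0)
    (hbdd : BddBelow (msupp μ)) :
    ((∃ C : ℝ, ∀ t : ℝ, 0 < t →
        Real.exp (-sInf (msupp μ) * t) / laplace μ t ≤ C)
      ↔ 0 < μ {sInf (msupp μ)}) ∧
    ((∃ C : ℝ, ∀ t : ℝ, 0 < t →
        laplace μ (2 * t) / (laplace μ t) ^ 2 ≤ C)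
      ↔ 0 < μ {sInf (msupp μ)}) ∧
    (0 < μ {sInf (msupp μ)} →
      Tendsto (fun t => Real.exp (-sInf (msupp μ) * t) / laplace μ t)
        atTop (nhds (1 / (μ {sInf (msupp μ)}).toReal)) ∧
      Tendsto (fun t => laplace μ (2 * t) / (laplace μ t) ^ 2)
        atTop (nhds (1 / (μ {sInf (msupp μ)}).toReal))) := by
  rw [msupp_eq_support] at hbdd ⊢
  set l := sInf μ.support
  have hl : ∀ᵐ s ∂μ, l ≤ s := by
    filter_upwards [Measure.support_mem_ae] with s hs using csInf_le hbdd hs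
  have hmem : l ∈ μ.support :=
    Measure.isClosed_support.csInf_mem (Measure.nonempty_support hμ) hbdd
  simp only [exp_neg_mul_div_laplace μ l, laplace_two_mul_div_sq μ l]
  have hbounded : 0 < μ {l} → ∃ C : ℝ, ∀ t > 0, 1 / shiftedLaplace μ l t ≤ C := fun h =>
    ⟨1 / μ.real {l}, fun _ ht => one_div_le_one_div_of_le
      (ENNReal.toReal_pos h.ne' (measure_ne_top μ _))
      (measureReal_singleton_le_shiftedLaplace hl ht.le)⟩
  have hdoubling : (∃ C : ℝ, ∀ t > 0, 1 / shiftedLaplace μ l t ≤ C) →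
      ∃ C : ℝ, ∀ t > 0, shiftedLaplace μ l (2 * t) / shiftedLaplace μ l t ^ 2 ≤ C :=
    fun ⟨_, hC⟩ => ⟨_, fun _ ht => shiftedLaplace_two_mul_div_sq_le hl hC ht⟩
  have hatom : (∃ C : ℝ, ∀ t > 0, shiftedLaplace μ l (2 * t) / shiftedLaplace μ l t ^ 2 ≤ C) →
      0 < μ {l} :=
    fun ⟨_, hC⟩ => measure_singleton_pos_of_doubling hl hmem hC
  refine ⟨⟨fun h => hatom (hdoubling h), hbounded⟩, ⟨hatom, fun h => hdoubling (hbounded h)⟩,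
    fun h => ?_⟩
  have ha : (μ {l}).toReal ≠ 0 := (ENNReal.toReal_pos h.ne' (measure_ne_top μ _)).ne'
  have hg := tendsto_shiftedLaplace_atTop hl
  refine ⟨tendsto_const_nhds.div hg ha, ?_⟩
  have hlim : μ.real {l} / μ.real {l} ^ 2 = 1 / (μ {l}).toReal := by
    rw [Measure.real_def]
    field_simp
  exact hlim ▸ (hg.comp (tendsto_id.const_mul_atTop two_pos)).div (hg.pow 2) (pow_ne_zero 2 ha)

end
end
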